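/- arXiv:1606.03563 — 3 statements merged into one kernel-verified Lean document; each statement's English description precedes it below -/
import Mathlib

section
/- In the group G_5^2, let X = a_{12}a_{13}a_{12}a_{13} and Y = a_{23}a_{35}a_{23}a_{35}. Then the commutator [X,Y] = X Y X^{-1} Y^{-1} is not equal to the identity element of G_5^2. -/
namespace GnkBrunnian

/-! ## Index types for generators -/

/-- Validity of a pair index: `1 ≤ i < j ≤ n`. -/
abbrev P2ok (n : ℕ) (p : ℕ × ℕ) : Prop := 1 ≤ p.1 ∧ p.1 < p.2 ∧ p.2 ≤ n

/-- Index type for the generators `a_{ij}` of `G_n^2` (and `b_{ij}` of `PB_n`). -/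
abbrev PIdx (n : ℕ) := {p : ℕ × ℕ // P2ok n p}

/-- Validity of a triple index: `1 ≤ i < j < k ≤ n`. -/
abbrev T3ok (n : ℕ) (t : ℕ × ℕ × ℕ) : Prop :=
  1 ≤ t.1 ∧ t.1 < t.2.1 ∧ t.2.1 < t.2.2 ∧ t.2.2 ≤ n

/-- Index type for the generators `a_{ijk}` of `G_n^3`. -/
abbrev TIdx (n : ℕ) := {t : ℕ × ℕ × ℕ // T3ok n t}

def sort2 (a b : ℕ) : ℕ × ℕ := (min a b, max a b)

def sort3 (a b c : ℕ) : ℕ × ℕ × ℕ :=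
  (min a (min b c), a + b + c - min a (min b c) - max a (max b c), max a (max b c))

def pairSet {n : ℕ} (p : PIdx n) : Finset ℕ := {p.1.1, p.1.2}

def tripSet {n : ℕ} (t : TIdx n) : Finset ℕ := {t.1.1, t.1.2.1, t.1.2.2}

/-- Reindexing after deleting the strand `m` : indices above `m` are decreased by one. -/
def del (m x : ℕ) : ℕ := if m < x then x - 1 else x

/-! ## The group `G_n^2` -/

/-- The free-group letter `a_{\{a,b\}}` (trivial if the index is out of range). -/
def fgen2 (n a b : ℕ) : FreeGroup (PIdx n) :=
  if h : P2ok n (sort2 a b) then FreeGroup.of ⟨sort2 a b, h⟩ else 1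

/-- The defining relators of `G_n^2`. -/
def rels2 (n : ℕ) : Set (FreeGroup (PIdx n)) :=
  {r | ∃ a : PIdx n, r = .of a * .of a} ∪
  {r | ∃ i j k l : ℕ,
      1 ≤ i ∧ i ≤ n ∧ 1 ≤ j ∧ j ≤ n ∧ 1 ≤ k ∧ k ≤ n ∧ 1 ≤ l ∧ l ≤ n ∧
      i ≠ j ∧ i ≠ k ∧ i ≠ l ∧ j ≠ k ∧ j ≠ l ∧ k ≠ l ∧
      r = fgen2 n i j * fgen2 n k l * (fgen2 n i j)⁻¹ * (fgen2 n k l)⁻¹} ∪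
  {r | ∃ i j k : ℕ,
      1 ≤ i ∧ i ≤ n ∧ 1 ≤ j ∧ j ≤ n ∧ 1 ≤ k ∧ k ≤ n ∧ i ≠ j ∧ i ≠ k ∧ j ≠ k ∧
      r = fgen2 n i j * fgen2 n i k * fgen2 n j k *
          (fgen2 n j k * fgen2 n i k * fgen2 n i j)⁻¹}

/-- The group `G_n^2`. -/
abbrev G2 (n : ℕ) := PresentedGroup (rels2 n)

/-- The generator `a_{\{a,b\}}` of `G_n^2` (trivial if the index is out of range). -/
def ggen2 (n a b : ℕ) : G2 n :=
  if h : P2ok n (sort2 a b) then PresentedGroup.of ⟨sort2 a b, h⟩ else 1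

/-- The element of `G_n^2` represented by a word in the generators. -/
def toG2 {n : ℕ} (β : List (PIdx n)) : G2 n :=
  (β.map fun a => (PresentedGroup.of a : G2 n)).prod

/-! ## The group `G_n^3` -/

/-- The free-group letter `a_{\{a,b,c\}}` (trivial if the index is out of range). -/
def fgen3 (n a b c : ℕ) : FreeGroup (TIdx n) :=
  if h : T3ok n (sort3 a b c) then FreeGroup.of ⟨sort3 a b c, h⟩ else 1

/-- The defining relators of `G_n^3`. -/
def rels3 (n : ℕ) : Set (FreeGroup (TIdx n)) :=
  {r | ∃ a : TIdx n, r = .of a * .of a} ∪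
  {r | ∃ a b : TIdx n, (tripSet a ∩ tripSet b).card < 2 ∧
      r = .of a * .of b * (.of a)⁻¹ * (.of b)⁻¹} ∪
  {r | ∃ i j k l : ℕ,
      1 ≤ i ∧ i ≤ n ∧ 1 ≤ j ∧ j ≤ n ∧ 1 ≤ k ∧ k ≤ n ∧ 1 ≤ l ∧ l ≤ n ∧
      i ≠ j ∧ i ≠ k ∧ i ≠ l ∧ j ≠ k ∧ j ≠ l ∧ k ≠ l ∧
      r = fgen3 n i j k * fgen3 n i j l * fgen3 n i k l * fgen3 n j k l *
          (fgen3 n j k l * fgen3 n i k l * fgen3 n i j l * fgen3 n i j k)⁻¹}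

/-- The group `G_n^3`. -/
abbrev G3 (n : ℕ) := PresentedGroup (rels3 n)

/-- The generator `a_{\{a,b,c\}}` of `G_n^3` (trivial if the index is out of range). -/
def ggen3 (n a b c : ℕ) : G3 n :=
  if h : T3ok n (sort3 a b c) then PresentedGroup.of ⟨sort3 a b c, h⟩ else 1

/-- The element of `G_n^3` represented by a word in the generators. -/
def toG3 {n : ℕ} (β : List (TIdx n)) : G3 n :=
  (β.map fun a => (PresentedGroup.of a : G3 n)).prod

/-! ## The pure braid group `PB_n` (standard Artin/Birman presentation) -/

/-- The defining relators of the pure braid group on `n` strands, in the standard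
presentation on the generators `b_{ij} = A_{ij}`, `1 ≤ i < j ≤ n`. -/
def relsPB (n : ℕ) : Set (FreeGroup (PIdx n)) :=
  {x | ∃ r s i j : ℕ, P2ok n (r, s) ∧ P2ok n (i, j) ∧ (s < i ∨ (i < r ∧ s < j)) ∧
      x = (fgen2 n r s)⁻¹ * fgen2 n i j * fgen2 n r s * (fgen2 n i j)⁻¹} ∪
  {x | ∃ r s j : ℕ, 1 ≤ r ∧ r < s ∧ s < j ∧ j ≤ n ∧
      x = (fgen2 n r s)⁻¹ * fgen2 n s j * fgen2 n r s *
          (fgen2 n r j * fgen2 n s j * (fgen2 n r j)⁻¹)⁻¹} ∪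
  {x | ∃ r s j : ℕ, 1 ≤ r ∧ r < s ∧ s < j ∧ j ≤ n ∧
      x = (fgen2 n r s)⁻¹ * fgen2 n r j * fgen2 n r s *
          ((fgen2 n r j * fgen2 n s j) * fgen2 n r j * (fgen2 n r j * fgen2 n s j)⁻¹)⁻¹} ∪
  {x | ∃ r i s j : ℕ, 1 ≤ r ∧ r < i ∧ i < s ∧ s < j ∧ j ≤ n ∧
      x = (fgen2 n r s)⁻¹ * fgen2 n i j * fgen2 n r s *
          ((fgen2 n r j * fgen2 n s j * (fgen2 n r j)⁻¹ * (fgen2 n s j)⁻¹) * fgen2 n i j *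
           (fgen2 n r j * fgen2 n s j * (fgen2 n r j)⁻¹ * (fgen2 n s j)⁻¹)⁻¹)⁻¹}

/-- The pure braid group on `n` strands. -/
abbrev PB (n : ℕ) := PresentedGroup (relsPB n)

/-- The standard generator `b_{ij}` of `PB_n` (trivial if the index is out of range). -/
def pbgen (n a b : ℕ) : PB n :=
  if h : P2ok n (sort2 a b) then PresentedGroup.of ⟨sort2 a b, h⟩ else 1

/-! ## The elements `c^n_{i,j}` and the homomorphism `φ_n` -/

/-- `c^n_{i,j} = (∏_{k=j+1}^{n} a_{ijk}) * (∏_{k=1, k∉{i,j}}^{j-1} a_{ijk}) ∈ G_n^3`. -/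
def cElt (n i j : ℕ) : G3 n :=
  (((List.range' (j + 1) (n - j)).map fun k => ggen3 n i j k).prod) *
  (((List.range' 1 (j - 1)).map fun k => ggen3 n i j k).prod)

/-- The image of `b_{ij}` under `φ_n`:
`(c^n_{i,i+1})⁻¹ ⋯ (c^n_{i,j-1})⁻¹ (c^n_{i,j})² c^n_{i,j-1} ⋯ c^n_{i,i+1}`. -/
def phiElt (n i j : ℕ) : G3 n :=
  (((List.range' (i + 1) (j - 1 - i)).map fun m => (cElt n i m)⁻¹).prod) *
  (cElt n i j) ^ 2 *
  (((List.range' (i + 1) (j - 1 - i)).reverse.map fun m => cElt n i m).prod)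

/-- `q` is the strand-deletion homomorphism `q_m : G_n^3 → G_{n-1}^3`. -/
def IsShift3 (n m : ℕ) (q : G3 n →* G3 (n - 1)) : Prop :=
  ∀ i j k : ℕ, 1 ≤ i → i < j → j < k → k ≤ n →
    q (ggen3 n i j k) =
      if m = i ∨ m = j ∨ m = k then 1
      else ggen3 (n - 1) (del m i) (del m j) (del m k)

/-- `p` is the strand-deletion homomorphism `p_m : PB_n → PB_{n-1}`. -/
def IsShiftPB (n m : ℕ) (p : PB n →* PB (n - 1)) : Prop :=
  ∀ i j : ℕ, 1 ≤ i → i < j → j ≤ n →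
    p (pbgen n i j) =
      if m = i ∨ m = j then 1 else pbgen (n - 1) (del m i) (del m j)

/-- `φ` is the Manturov–Nikonov homomorphism `φ_n : PB_n → G_n^3`. -/
def IsPhi (n : ℕ) (φ : PB n →* G3 n) : Prop :=
  ∀ i j : ℕ, 1 ≤ i → i < j → j ≤ n → φ (pbgen n i j) = phiElt n i j

/-! ## Words and good condition -/

def good2 {n : ℕ} (β : List (PIdx n)) : Prop := ∀ a : PIdx n, Even (β.count a)

def good3 {n : ℕ} (β : List (TIdx n)) : Prop := ∀ a : TIdx n, Even (β.count a)

/-! ## Free products of copies of `ℤ/2` -/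

/-- The free product of copies of `ℤ/2ℤ` indexed by `ι`. -/
abbrev FP2 (ι : Type) := PresentedGroup {r : FreeGroup ι | ∃ a : ι, r = .of a * .of a}

/-- Indices `l ∈ {1,…,n} \ {i,j,k}`. -/
abbrev SIdx3 (n i j k : ℕ) := {l : ℕ // (1 ≤ l ∧ l ≤ n) ∧ l ≠ i ∧ l ≠ j ∧ l ≠ k}

/-- The group `F_n^3` (for the fixed triple `(i,j,k)`). -/
abbrev F3 (n i j k : ℕ) := FP2 (SIdx3 n i j k → ZMod 2 × ZMod 2)

/-- Indices `k ∈ {1,…,n} \ {i,j}`. -/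
abbrev SIdx2 (n i j : ℕ) := {l : ℕ // (1 ≤ l ∧ l ≤ n) ∧ l ≠ i ∧ l ≠ j}

/-- The group `F_n^2` (for the fixed pair `(i,j)`). -/
abbrev F2 (n i j : ℕ) := FP2 (SIdx2 n i j → ZMod 2)

/-! ## The MN-invariants `w_{(i,j)}` and `w_{(i,j,k)}` -/

/-- The number of occurrences of the generator `a_{\{a,b\}}` in a word over `G_n^2`. -/
def cnt2 {n : ℕ} (β : List (PIdx n)) (a b : ℕ) : ℕ :=
  (β.filter fun x => decide (pairSet x = ({a, b} : Finset ℕ))).length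

/-- The number of occurrences of the generator `a_{\{a,b,c\}}` in a word over `G_n^3`. -/
def cnt3 {n : ℕ} (β : List (TIdx n)) (a b c : ℕ) : ℕ :=
  (β.filter fun x => decide (tripSet x = ({a, b, c} : Finset ℕ))).length

/-- `i_c` for an occurrence of `a_{ij}` with prefix `pre`: `i_c(k) = N_{ik} + N_{jk} (mod 2)`. -/
def iC2 {n : ℕ} (i j : ℕ) (pre : List (PIdx n)) : SIdx2 n i j → ZMod 2 :=
  fun k => ((cnt2 pre i k.1 + cnt2 pre j k.1 : ℕ) : ZMod 2)

/-- The MN-invariant `w_{(i,j)}` of a word over `G_n^2`. -/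
def w2 {n : ℕ} (i j : ℕ) (β : List (PIdx n)) : F2 n i j :=
  (((β.zipIdx.map Prod.swap).filter fun x => decide (pairSet x.2 = ({i, j} : Finset ℕ))).map
    fun x => (PresentedGroup.of (iC2 i j (β.take x.1)) : F2 n i j)).prod

/-- `i_c` for an occurrence of `a_{ijk}` with prefix `pre`:
`i_c(l) = (N_{jkl} + N_{ijl}, N_{ikl} + N_{ijl}) (mod 2)`. -/
def iC3 {n : ℕ} (i j k : ℕ) (pre : List (TIdx n)) : SIdx3 n i j k → ZMod 2 × ZMod 2 :=
  fun l => (((cnt3 pre j k l.1 + cnt3 pre i j l.1 : ℕ) : ZMod 2),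
            ((cnt3 pre i k l.1 + cnt3 pre i j l.1 : ℕ) : ZMod 2))

/-- The MN-invariant `w_{(i,j,k)}` of a word over `G_n^3`. -/
def w3 {n : ℕ} (i j k : ℕ) (β : List (TIdx n)) : F3 n i j k :=
  (((β.zipIdx.map Prod.swap).filter fun x => decide (tripSet x.2 = ({i, j, k} : Finset ℕ))).map
    fun x => (PresentedGroup.of (iC3 i j k (β.take x.1)) : F3 n i j k)).prod

/-! ## Explicit words for `c^n_{i,j}` and `φ_n(b_{ij})` -/

def tripMkS (n a b c : ℕ) : Option (TIdx n) :=
  if h : T3ok n (sort3 a b c) then some ⟨sort3 a b c, h⟩ else none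

def pairMkS (n a b : ℕ) : Option (PIdx n) :=
  if h : P2ok n (sort2 a b) then some ⟨sort2 a b, h⟩ else none

/-- The defining word of `c^n_{i,j}`. -/
def cWord (n i j : ℕ) : List (TIdx n) :=
  ((List.range' (j + 1) (n - j)).filterMap fun k => tripMkS n i j k) ++
  ((List.range' 1 (j - 1)).filterMap fun k => tripMkS n i j k)

/-- The defining word of `φ_n(b_{ij})`, with the inverses of the `c`-words expanded using
`a⁻¹ = a` for generators (i.e. by reversing the words). -/
def phiWord (n i j : ℕ) : List (TIdx n) :=
  (((List.range' (i + 1) (j - 1 - i)).map fun m => (cWord n i m).reverse).flatten) ++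
  cWord n i j ++ cWord n i j ++
  (((List.range' (i + 1) (j - 1 - i)).reverse.map fun m => cWord n i m).flatten)

/-! ## The group `G_{n,p}^2` (parity) -/

/-- Index type for the generators `a_{ij}^ε` of `G_{n,p}^2`. -/
abbrev PPIdx (n : ℕ) := PIdx n × ZMod 2

def fgenP2 (n a b : ℕ) (e : ZMod 2) : FreeGroup (PPIdx n) :=
  if h : P2ok n (sort2 a b) then FreeGroup.of (⟨sort2 a b, h⟩, e) else 1

/-- The defining relators of `G_{n,p}^2`. -/
def relsP2 (n : ℕ) : Set (FreeGroup (PPIdx n)) :=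
  {r | ∃ a : PPIdx n, r = .of a * .of a} ∪
  {r | ∃ (i j k l : ℕ) (e e' : ZMod 2),
      1 ≤ i ∧ i ≤ n ∧ 1 ≤ j ∧ j ≤ n ∧ 1 ≤ k ∧ k ≤ n ∧ 1 ≤ l ∧ l ≤ n ∧
      i ≠ j ∧ i ≠ k ∧ i ≠ l ∧ j ≠ k ∧ j ≠ l ∧ k ≠ l ∧
      r = fgenP2 n i j e * fgenP2 n k l e' * (fgenP2 n i j e)⁻¹ * (fgenP2 n k l e')⁻¹} ∪
  {r | ∃ (i j k : ℕ) (e1 e2 e3 : ZMod 2),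
      1 ≤ i ∧ i < j ∧ j < k ∧ k ≤ n ∧ e1 + e2 + e3 = 0 ∧
      r = fgenP2 n i j e1 * fgenP2 n i k e2 * fgenP2 n j k e3 *
          (fgenP2 n j k e3 * fgenP2 n i k e2 * fgenP2 n i j e1)⁻¹}

/-- The group `G_{n,p}^2`. -/
abbrev GP2 (n : ℕ) := PresentedGroup (relsP2 n)

/-- The element of `G_{n,p}^2` represented by a word in the generators. -/
def toGP2 {n : ℕ} (β : List (PPIdx n)) : GP2 n :=
  (β.map fun a => (PresentedGroup.of a : GP2 n)).prod

/-! ## The parity invariant `w^p_{ij}` on `G_{n,p}^2` -/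

/-- The number of occurrences of `a_{\{a,b\}}^e` in a word over `G_{n,p}^2`. -/
def cntP2 {n : ℕ} (β : List (PPIdx n)) (a b : ℕ) (e : ZMod 2) : ℕ :=
  (β.filter fun x => decide (pairSet x.1 = ({a, b} : Finset ℕ) ∧ x.2 = e)).length

/-- `i^p_c` for an occurrence of `a_{ij}^e` with prefix `pre`. -/
def iCP2 {n : ℕ} (i j : ℕ) (e : ZMod 2) (pre : List (PPIdx n)) : SIdx2 n i j → ZMod 2 :=
  fun k =>
    if e = 0 then ((cntP2 pre i k.1 0 + cntP2 pre j k.1 0 : ℕ) : ZMod 2)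
    else ((cntP2 pre i k.1 0 + cntP2 pre j k.1 1 : ℕ) : ZMod 2)

/-- The invariant `w^p_{ij}` of a word over `G_{n,p}^2`. -/
def wP2 {n : ℕ} (i j : ℕ) (β : List (PPIdx n)) : F2 n i j :=
  (((β.zipIdx.map Prod.swap).filter fun x => decide (pairSet x.2.1 = ({i, j} : Finset ℕ))).map
    fun x => (PresentedGroup.of (iCP2 i j x.2.2 (β.take x.1)) : F2 n i j)).prod

/-! ## The map `ψ_l : G_{n+1}^2 → G_{n,p}^2` -/

/-- The word over `G_{n,p}^2` obtained from a word over `G_{n+1}^2` by deleting the strand `l`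
and recording parities. -/
def psiWord (n l : ℕ) (β : List (PIdx (n + 1))) : List (PPIdx n) :=
  (β.zipIdx.map Prod.swap).filterMap fun x =>
    if l = x.2.1.1 ∨ l = x.2.1.2 then none
    else (pairMkS n (del l x.2.1.1) (del l x.2.1.2)).map fun p =>
      (p, ((cnt2 (β.take x.1) x.2.1.1 l + cnt2 (β.take x.1) x.2.1.2 l : ℕ) : ZMod 2))

/-! ## The group `G_{n,p}^3` (parity) -/

/-- Index type for the generators `a_{ijk}^ε` of `G_{n,p}^3`. -/
abbrev TPIdx (n : ℕ) := TIdx n × ZMod 2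

def fgenP3 (n a b c : ℕ) (e : ZMod 2) : FreeGroup (TPIdx n) :=
  if h : T3ok n (sort3 a b c) then FreeGroup.of (⟨sort3 a b c, h⟩, e) else 1

/-- The defining relators of `G_{n,p}^3`. -/
def relsP3 (n : ℕ) : Set (FreeGroup (TPIdx n)) :=
  {r | ∃ a : TPIdx n, r = .of a * .of a} ∪
  {r | ∃ a b : TPIdx n, (tripSet a.1 ∩ tripSet b.1).card < 2 ∧
      r = (.of a * .of b) ^ 2} ∪
  {r | ∃ (i j k l : ℕ) (ei ej ek el : ZMod 2),
      1 ≤ i ∧ i ≤ n ∧ 1 ≤ j ∧ j ≤ n ∧ 1 ≤ k ∧ k ≤ n ∧ 1 ≤ l ∧ l ≤ n ∧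
      i ≠ j ∧ i ≠ k ∧ i ≠ l ∧ j ≠ k ∧ j ≠ l ∧ k ≠ l ∧
      (if max (max i j) (max k l) = i then ej + ek + el
       else if max (max i j) (max k l) = j then ei + ek + el
       else if max (max i j) (max k l) = k then ei + ej + el
       else ei + ej + ek) = 0 ∧
      r = (fgenP3 n i j k el * fgenP3 n i j l ek * fgenP3 n i k l ej * fgenP3 n j k l ei) ^ 2}

/-- The group `G_{n,p}^3`. -/
abbrev GP3 (n : ℕ) := PresentedGroup (relsP3 n)

/-- The element of `G_{n,p}^3` represented by a word in the generators. -/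
def toGP3 {n : ℕ} (β : List (TPIdx n)) : GP3 n :=
  (β.map fun a => (PresentedGroup.of a : GP3 n)).prod

/-! ## The map `f : G_{n+1}^3 → G_{n,p}^3` -/

/-- The word over `G_{n,p}^3` obtained from a word over `G_{n+1}^3` by deleting the letters
containing the index `n+1` and recording parities. -/
def fWord (n : ℕ) (β : List (TIdx (n + 1))) : List (TPIdx n) :=
  (β.zipIdx.map Prod.swap).filterMap fun x =>
    if x.2.1.2.2 = n + 1 then none
    else (tripMkS n x.2.1.1 x.2.1.2.1 x.2.1.2.2).map fun t =>
      (t, ((cnt3 (β.take x.1) x.2.1.2.1 x.2.1.2.2 (n + 1) +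
            cnt3 (β.take x.1) x.2.1.1 x.2.1.2.2 (n + 1) : ℕ) : ZMod 2))

/-! ## The parity invariant `w^p_{ijk}` on `G_{n,p}^3` -/

/-- The group `F_n^3` with values in `ℤ/2` (for the parity invariant). -/
abbrev F3p (n i j k : ℕ) := FP2 (SIdx3 n i j k → ZMod 2)

/-- The number of occurrences of `a_{\{a,b,c\}}^e` in a word over `G_{n,p}^3`. -/
def cntP3 {n : ℕ} (β : List (TPIdx n)) (a b c : ℕ) (e : ZMod 2) : ℕ :=
  (β.filter fun x => decide (tripSet x.1 = ({a, b, c} : Finset ℕ) ∧ x.2 = e)).length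

/-- `i^p_c` for an occurrence of `a_{ijk}^e` with prefix `pre` (here `k > i, j`). -/
def iCP3 {n : ℕ} (i j k : ℕ) (e : ZMod 2) (pre : List (TPIdx n)) : SIdx3 n i j k → ZMod 2 :=
  fun l =>
    if e = 0 then
      (if k < l.1 then
        ((cntP3 pre i k l.1 0 + cntP3 pre j k l.1 0 + cntP3 pre i j l.1 1 : ℕ) : ZMod 2)
      else ((cntP3 pre i k l.1 0 + cntP3 pre j k l.1 0 : ℕ) : ZMod 2))
    else
      (if k < l.1 then
        ((cntP3 pre i k l.1 0 + cntP3 pre j k l.1 1 + cntP3 pre i j l.1 0 : ℕ) : ZMod 2)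
      else ((cntP3 pre i k l.1 0 + cntP3 pre j k l.1 1 : ℕ) : ZMod 2))

/-- The invariant `w^p_{ijk}` of a word over `G_{n,p}^3`. -/
def wP3 {n : ℕ} (i j k : ℕ) (β : List (TPIdx n)) : F3p n i j k :=
  (((β.zipIdx.map Prod.swap).filter fun x => decide (tripSet x.2.1 = ({i, j, k} : Finset ℕ))).map
    fun x => (PresentedGroup.of (iCP3 i j k x.2.2 (β.take x.1)) : F3p n i j k)).prod

/-! Sending `a_{ij}` to the transposition `(i j)` respects the defining relations, so it gives a
homomorphism `G_n^2 → Perm ℕ`. It maps `X` and `Y` to the 3-cycles `((1 2)(1 3))²` and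
`((2 3)(3 5))²` on `{1, 2, 3}` and `{2, 3, 5}`, whose commutator moves `1`. -/

open Equiv

theorem swap_mul_swap_mul_swap_of_ne {α : Type*} [DecidableEq α] {a b c : α}
    (hab : a ≠ b) (hbc : b ≠ c) : swap a b * swap a c * swap b c = swap a c := by
  ext x
  simp only [Perm.mul_apply, swap_apply_def]
  grind

theorem swap_sort2 (a b : ℕ) : swap (sort2 a b).1 (sort2 a b).2 = swap a b := by
  rcases le_total a b with h | h
  · simp [sort2, h]
  · simp [sort2, h, swap_comm]

theorem p2ok_sort2 {n a b : ℕ} (ha : 1 ≤ a) (ha' : a ≤ n) (hb : 1 ≤ b) (hb' : b ≤ n)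
    (hab : a ≠ b) : P2ok n (sort2 a b) := by
  simp only [P2ok, sort2]
  omega

def pairSwap {n : ℕ} (p : PIdx n) : Perm ℕ := swap p.1.1 p.1.2

theorem lift_pairSwap_fgen2 {n a b : ℕ} (h : P2ok n (sort2 a b)) :
    FreeGroup.lift pairSwap (fgen2 n a b) = swap a b := by
  rw [fgen2, dif_pos h, FreeGroup.lift_apply_of]
  exact swap_sort2 a b

theorem lift_pairSwap_rels2 (n : ℕ) : ∀ r ∈ rels2 n, FreeGroup.lift pairSwap r = 1 := by
  rintro r ((⟨a, rfl⟩ | ⟨i, j, k, l, hi, hi', hj, hj', hk, hk', hl, hl',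
      hij, hik, hil, hjk, hjl, hkl, rfl⟩) |
      ⟨i, j, k, hi, hi', hj, hj', hk, hk', hij, hik, hjk, rfl⟩)
  · simp [pairSwap]
  · have hcomm : Commute (swap i j) (swap k l) :=
      (Perm.disjoint_swap_swap (by simp [*])).commute
    simp only [map_mul, map_inv, lift_pairSwap_fgen2 (p2ok_sort2 hi hi' hj hj' hij),
      lift_pairSwap_fgen2 (p2ok_sort2 hk hk' hl hl' hkl), hcomm.eq, mul_inv_cancel_right,
      mul_inv_cancel]
  · simp only [map_mul, map_inv, lift_pairSwap_fgen2 (p2ok_sort2 hi hi' hj hj' hij),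
      lift_pairSwap_fgen2 (p2ok_sort2 hi hi' hk hk' hik),
      lift_pairSwap_fgen2 (p2ok_sort2 hj hj' hk hk' hjk), swap_mul_swap_mul_swap_of_ne hij hjk]
    rw [swap_comm j k, swap_comm i k, swap_comm i j,
      swap_mul_swap_mul_swap_of_ne hjk.symm hij.symm, swap_comm k i, mul_inv_cancel]

def G2.toPerm (n : ℕ) : G2 n →* Perm ℕ := PresentedGroup.toGroup (lift_pairSwap_rels2 n)

theorem G2.toPerm_ggen2 {n a b : ℕ} (h : P2ok n (sort2 a b)) :
    G2.toPerm n (ggen2 n a b) = swap a b := by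
  rw [ggen2, dif_pos h, G2.toPerm, PresentedGroup.toGroup.of]
  exact swap_sort2 a b

theorem statement_13 :
    (ggen2 5 1 2 * ggen2 5 1 3 * ggen2 5 1 2 * ggen2 5 1 3) *
    (ggen2 5 2 3 * ggen2 5 3 5 * ggen2 5 2 3 * ggen2 5 3 5) *
    (ggen2 5 1 2 * ggen2 5 1 3 * ggen2 5 1 2 * ggen2 5 1 3)⁻¹ *
    (ggen2 5 2 3 * ggen2 5 3 5 * ggen2 5 2 3 * ggen2 5 3 5)⁻¹ ≠ 1 := by
  intro h
  have hperm := congrArg (fun g => G2.toPerm 5 g 1) h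
  simp (disch := decide) only [map_mul, map_inv, map_one, G2.toPerm_ggen2] at hperm
  revert hperm
  decide

end GnkBrunnian
end

section
/- For every n ≥ 3 and every m ∈ {1,…,n+1}, the assignment on generators r_m(a_{ijk}) = 1 if m ∉ {i,j,k}, and, if m ∈ {i,j,k}, r_m(a_{ijk}) = a_{st} where {s,t} is obtained from {i,j,k}∖{m} by decreasing each index greater than m by 1, sends every defining relator of G_{n+1}^3 to the identity of G_n^2, and hence extends to a group homomorphism r_m : G_{n+1}^3 → G_n^2. -/
namespace GnkBrunnian

/-- The prescribed image of the generator `a_{ijk}` of `G_{n+1}^3` under `r_m`. -/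
def rfun (n m : ℕ) (a : TIdx (n + 1)) : G2 n :=
  if m = a.1.1 then ggen2 n (del m a.1.2.1) (del m a.1.2.2)
  else if m = a.1.2.1 then ggen2 n (del m a.1.1) (del m a.1.2.2)
  else if m = a.1.2.2 then ggen2 n (del m a.1.1) (del m a.1.2.1)
  else 1

/-!
Every generator goes to `1` or to an involution `a_{st}`. A commutation relator involves two
nontrivial images only when both triples contain `m`; as they share at most one index, the
remaining pairs are then disjoint and the images commute in `G_n^2`. In a tetrahedron relator on
`{i, j, k, l} ∋ m`, the factor whose triple avoids `m` becomes `1` and the other three give the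
relation `a_{st} a_{su} a_{tu} = a_{tu} a_{su} a_{st}` on the remaining three indices. Deleting
`m` is injective off `m` and maps `{1, …, n+1} \ {m}` into `{1, …, n}`, so indices stay distinct
and in range.
-/

section Delete

variable {N m x y : ℕ}

lemma one_le_del (hm : 1 ≤ m) (hx : 1 ≤ x) : 1 ≤ del m x := by
  unfold del; split_ifs <;> omega

lemma del_le (hm : m ≤ N + 1) (hx : x ≤ N + 1) (hxm : x ≠ m) : del m x ≤ N := by
  unfold del; split_ifs <;> omega

lemma del_ne_del (hxy : x ≠ y) (hxm : x ≠ m) (hym : y ≠ m) : del m x ≠ del m y := by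
  unfold del; split_ifs <;> omega

end Delete

section G2

lemma ggen2_swap (n a b : ℕ) : ggen2 n a b = ggen2 n b a := by
  have h : sort2 a b = sort2 b a := by simp only [sort2, Prod.mk.injEq]; omega
  unfold ggen2
  rw [h]

lemma mk_fgen2 (n a b : ℕ) : PresentedGroup.mk (rels2 n) (fgen2 n a b) = ggen2 n a b := by
  unfold fgen2 ggen2
  split_ifs
  · rfl
  · exact map_one _

lemma ggen2_mul_self (n a b : ℕ) : ggen2 n a b * ggen2 n a b = 1 := by
  unfold ggen2
  split_ifs with h
  · exact PresentedGroup.one_of_mem (rels := rels2 n) (Or.inl (Or.inl ⟨⟨sort2 a b, h⟩, rfl⟩))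
  · exact mul_one 1

lemma ggen2_swapute (n p q s t : ℕ) (hp : 1 ≤ p) (hp' : p ≤ n) (hq : 1 ≤ q) (hq' : q ≤ n)
    (hs : 1 ≤ s) (hs' : s ≤ n) (ht : 1 ≤ t) (ht' : t ≤ n)
    (hpq : p ≠ q) (hps : p ≠ s) (hpt : p ≠ t) (hqs : q ≠ s) (hqt : q ≠ t) (hst : s ≠ t) :
    Commute (ggen2 n p q) (ggen2 n s t) := by
  have h := PresentedGroup.one_of_mem (rels := rels2 n)
    (Or.inl (Or.inr ⟨p, q, s, t, hp, hp', hq, hq', hs, hs', ht, ht',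
      hpq, hps, hpt, hqs, hqt, hst, rfl⟩))
  simp only [map_mul, map_inv, mk_fgen2] at h
  rwa [mul_inv_eq_one, mul_inv_eq_iff_eq_mul] at h

lemma ggen2_yangBaxter (n a b c : ℕ) (ha : 1 ≤ a) (ha' : a ≤ n) (hb : 1 ≤ b) (hb' : b ≤ n)
    (hc : 1 ≤ c) (hc' : c ≤ n) (hab : a ≠ b) (hac : a ≠ c) (hbc : b ≠ c) :
    ggen2 n a b * ggen2 n a c * ggen2 n b c = ggen2 n b c * ggen2 n a c * ggen2 n a b := by
  have h := PresentedGroup.one_of_mem (rels := rels2 n)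
    (Or.inr ⟨a, b, c, ha, ha', hb, hb', hc, hc', hab, hac, hbc, rfl⟩)
  simp only [map_mul, map_inv, mk_fgen2] at h
  rwa [mul_inv_eq_one] at h

end G2

section DeleteStrand

variable {n m : ℕ}

lemma ggen2_del_commute {p q s t : ℕ} (hm : 1 ≤ m) (hm' : m ≤ n + 1)
    (hp : 1 ≤ p) (hp' : p ≤ n + 1) (hq : 1 ≤ q) (hq' : q ≤ n + 1)
    (hs : 1 ≤ s) (hs' : s ≤ n + 1) (ht : 1 ≤ t) (ht' : t ≤ n + 1)
    (hpm : p ≠ m) (hqm : q ≠ m) (hsm : s ≠ m) (htm : t ≠ m)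
    (hpq : p ≠ q) (hps : p ≠ s) (hpt : p ≠ t) (hqs : q ≠ s) (hqt : q ≠ t) (hst : s ≠ t) :
    Commute (ggen2 n (del m p) (del m q)) (ggen2 n (del m s) (del m t)) :=
  ggen2_swapute n _ _ _ _ (one_le_del hm hp) (del_le hm' hp' hpm) (one_le_del hm hq)
    (del_le hm' hq' hqm) (one_le_del hm hs) (del_le hm' hs' hsm) (one_le_del hm ht)
    (del_le hm' ht' htm) (del_ne_del hpq hpm hqm) (del_ne_del hps hpm hsm)
    (del_ne_del hpt hpm htm) (del_ne_del hqs hqm hsm) (del_ne_del hqt hqm htm)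
    (del_ne_del hst hsm htm)

lemma ggen2_del_yangBaxter {a b c : ℕ} (hm : 1 ≤ m) (hm' : m ≤ n + 1)
    (ha : 1 ≤ a) (ha' : a ≤ n + 1) (hb : 1 ≤ b) (hb' : b ≤ n + 1) (hc : 1 ≤ c) (hc' : c ≤ n + 1)
    (ham : a ≠ m) (hbm : b ≠ m) (hcm : c ≠ m) (hab : a ≠ b) (hac : a ≠ c) (hbc : b ≠ c) :
    ggen2 n (del m a) (del m b) * ggen2 n (del m a) (del m c) * ggen2 n (del m b) (del m c) =
      ggen2 n (del m b) (del m c) * ggen2 n (del m a) (del m c) * ggen2 n (del m a) (del m b) :=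
  ggen2_yangBaxter n _ _ _ (one_le_del hm ha) (del_le hm' ha' ham) (one_le_del hm hb)
    (del_le hm' hb' hbm) (one_le_del hm hc) (del_le hm' hc' hcm) (del_ne_del hab ham hbm)
    (del_ne_del hac ham hcm) (del_ne_del hbc hbm hcm)

end DeleteStrand

section Triples

variable {n m : ℕ}

lemma mem_tripSet {x : ℕ} {a : TIdx n} : x ∈ tripSet a ↔ x = a.1.1 ∨ x = a.1.2.1 ∨ x = a.1.2.2 := by
  simp only [tripSet, Finset.mem_insert, Finset.mem_singleton]

lemma bounds_of_mem_tripSet {x : ℕ} {a : TIdx n} (h : x ∈ tripSet a) : 1 ≤ x ∧ x ≤ n := by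
  have := a.2
  rw [mem_tripSet] at h
  omega

lemma sort3_eq_perm (a b c : ℕ) :
    sort3 a b c = (a, b, c) ∨ sort3 a b c = (a, c, b) ∨ sort3 a b c = (b, a, c) ∨
      sort3 a b c = (b, c, a) ∨ sort3 a b c = (c, a, b) ∨ sort3 a b c = (c, b, a) := by
  simp only [sort3, Prod.mk.injEq]
  omega

end Triples

/-- The value of `r_m` on `a_{abc}`, for the indices listed in any order. -/
def rImage (n m a b c : ℕ) : G2 n :=
  if m = a then ggen2 n (del m b) (del m c)
  else if m = b then ggen2 n (del m a) (del m c)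
  else if m = c then ggen2 n (del m a) (del m b)
  else 1

section RImage

variable {n m : ℕ}

lemma rfun_eq_rImage (a : TIdx (n + 1)) : rfun n m a = rImage n m a.1.1 a.1.2.1 a.1.2.2 := rfl

lemma rImage_swap₁₂ (a b c : ℕ) : rImage n m a b c = rImage n m b a c := by
  unfold rImage
  split_ifs <;> first | rfl | exact ggen2_swap n _ _ | subst_vars; rfl

lemma rImage_swap₂₃ (a b c : ℕ) : rImage n m a b c = rImage n m a c b := by
  unfold rImage
  split_ifs <;> first | rfl | exact ggen2_swap n _ _ | subst_vars; rfl

lemma rImage_sort3 (a b c : ℕ) :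
    rImage n m (sort3 a b c).1 (sort3 a b c).2.1 (sort3 a b c).2.2 = rImage n m a b c := by
  obtain h | h | h | h | h | h := sort3_eq_perm a b c <;> rw [h]
  · exact (rImage_swap₂₃ a b c).symm
  · exact (rImage_swap₁₂ a b c).symm
  · exact (rImage_swap₂₃ b c a).trans (rImage_swap₁₂ a b c).symm
  · exact (rImage_swap₁₂ c a b).trans (rImage_swap₂₃ a b c).symm
  · exact ((rImage_swap₂₃ c b a).trans (rImage_swap₁₂ c a b)).trans (rImage_swap₂₃ a b c).symm

lemma lift_rfun_fgen3 {a b c : ℕ} (ha : 1 ≤ a) (ha' : a ≤ n + 1) (hb : 1 ≤ b) (hb' : b ≤ n + 1)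
    (hc : 1 ≤ c) (hc' : c ≤ n + 1) (hab : a ≠ b) (hac : a ≠ c) (hbc : b ≠ c) :
    FreeGroup.lift (rfun n m) (fgen3 (n + 1) a b c) = rImage n m a b c := by
  have hsort : T3ok (n + 1) (sort3 a b c) := by simp only [T3ok, sort3]; omega
  rw [fgen3, dif_pos hsort, FreeGroup.lift_apply_of, rfun_eq_rImage]
  exact rImage_sort3 a b c

lemma rImage_tetrahedron {i j k l : ℕ} (hi : 1 ≤ i) (hi' : i ≤ n + 1) (hj : 1 ≤ j)
    (hj' : j ≤ n + 1) (hk : 1 ≤ k) (hk' : k ≤ n + 1) (hl : 1 ≤ l) (hl' : l ≤ n + 1)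
    (hij : i ≠ j) (hik : i ≠ k) (hil : i ≠ l) (hjk : j ≠ k) (hjl : j ≠ l) (hkl : k ≠ l) :
    rImage n m i j k * rImage n m i j l * rImage n m i k l * rImage n m j k l =
      rImage n m j k l * rImage n m i k l * rImage n m i j l * rImage n m i j k := by
  by_cases hmi : m = i
  · subst hmi
    simpa [rImage, hij, hik, hil] using
      ggen2_del_yangBaxter hi hi' hj hj' hk hk' hl hl' hij.symm hik.symm hil.symm hjk hjl hkl
  by_cases hmj : m = j
  · subst hmj
    simpa [rImage, hmi, hjk, hjl] using
      ggen2_del_yangBaxter hj hj' hi hi' hk hk' hl hl' (Ne.symm hmi) hjk.symm hjl.symm hik hil hkl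
  by_cases hmk : m = k
  · subst hmk
    simpa [rImage, hmi, hmj, hkl] using
      ggen2_del_yangBaxter hk hk' hi hi' hj hj' hl hl' (Ne.symm hmi) (Ne.symm hmj) hkl.symm
        hij hil hjl
  by_cases hml : m = l
  · subst hml
    simpa [rImage, hmi, hmj, hmk] using
      ggen2_del_yangBaxter hl hl' hi hi' hj hj' hk hk' (Ne.symm hmi) (Ne.symm hmj) (Ne.symm hmk)
        hij hik hjk
  simp [rImage, hmi, hmj, hmk, hml]

end RImage

section Relators

variable {n m : ℕ}

lemma rfun_mul_self (a : TIdx (n + 1)) : rfun n m a * rfun n m a = 1 := by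
  unfold rfun
  split_ifs <;> simp only [ggen2_mul_self, mul_one]

lemma rfun_eq_one {a : TIdx (n + 1)} (h : m ∉ tripSet a) : rfun n m a = 1 := by
  simp only [mem_tripSet, not_or] at h
  simp only [rfun, if_neg h.1, if_neg h.2.1, if_neg h.2.2]

lemma exists_rfun_eq {a : TIdx (n + 1)} (h : m ∈ tripSet a) :
    ∃ p ∈ tripSet a, ∃ q ∈ tripSet a, p ≠ q ∧ p ≠ m ∧ q ≠ m ∧
      rfun n m a = ggen2 n (del m p) (del m q) := by
  have := a.2
  rw [mem_tripSet] at h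
  rcases h with rfl | rfl | rfl
  · exact ⟨a.1.2.1, by simp [tripSet], a.1.2.2, by simp [tripSet], by omega, by omega, by omega,
      if_pos rfl⟩
  · exact ⟨a.1.1, by simp [tripSet], a.1.2.2, by simp [tripSet], by omega, by omega, by omega,
      by rw [rfun, if_neg (by omega), if_pos rfl]⟩
  · exact ⟨a.1.1, by simp [tripSet], a.1.2.1, by simp [tripSet], by omega, by omega, by omega,
      by rw [rfun, if_neg (by omega), if_neg (by omega), if_pos rfl]⟩

lemma rfun_commute {a b : TIdx (n + 1)} (hab : (tripSet a ∩ tripSet b).card < 2) :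
    Commute (rfun n m a) (rfun n m b) := by
  by_cases ha : m ∈ tripSet a
  swap
  · rw [rfun_eq_one ha]
    exact Commute.one_left _
  by_cases hb : m ∈ tripSet b
  swap
  · rw [rfun_eq_one hb]
    exact Commute.one_right _
  obtain ⟨p, hp, q, hq, hpq, hpm, hqm, hra⟩ := exists_rfun_eq ha
  obtain ⟨s, hs, t, ht, hst, hsm, htm, hrb⟩ := exists_rfun_eq hb
  have common_eq_m : ∀ x ∈ tripSet a, x ∈ tripSet b → x = m := fun x hxa hxb =>
    Finset.card_le_one.mp (by omega) x (Finset.mem_inter.2 ⟨hxa, hxb⟩) m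
      (Finset.mem_inter.2 ⟨ha, hb⟩)
  obtain ⟨hm, hm'⟩ := bounds_of_mem_tripSet ha
  obtain ⟨hp₁, hp₂⟩ := bounds_of_mem_tripSet hp
  obtain ⟨hq₁, hq₂⟩ := bounds_of_mem_tripSet hq
  obtain ⟨hs₁, hs₂⟩ := bounds_of_mem_tripSet hs
  obtain ⟨ht₁, ht₂⟩ := bounds_of_mem_tripSet ht
  rw [hra, hrb]
  exact ggen2_del_commute hm hm' hp₁ hp₂ hq₁ hq₂ hs₁ hs₂ ht₁ ht₂ hpm hqm hsm htm hpq
    (fun h => hpm (common_eq_m p hp (h ▸ hs))) (fun h => hpm (common_eq_m p hp (h ▸ ht)))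
    (fun h => hqm (common_eq_m q hq (h ▸ hs))) (fun h => hqm (common_eq_m q hq (h ▸ ht))) hst

lemma lift_rfun_eq_one_of_mem_rels3 {r : FreeGroup (TIdx (n + 1))} (hr : r ∈ rels3 (n + 1)) :
    FreeGroup.lift (rfun n m) r = 1 := by
  rcases hr with (⟨a, rfl⟩ | ⟨a, b, hab, rfl⟩) | ⟨i, j, k, l, hi, hi', hj, hj', hk, hk', hl, hl',
    hij, hik, hil, hjk, hjl, hkl, rfl⟩
  · simpa only [map_mul, FreeGroup.lift_apply_of] using rfun_mul_self a
  · simp only [map_mul, map_inv, FreeGroup.lift_apply_of, (rfun_commute hab).eq,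
      mul_inv_cancel_right, mul_inv_cancel]
  · simp only [map_mul, map_inv, lift_rfun_fgen3 hi hi' hj hj' hk hk' hij hik hjk,
      lift_rfun_fgen3 hi hi' hj hj' hl hl' hij hil hjl,
      lift_rfun_fgen3 hi hi' hk hk' hl hl' hik hil hkl,
      lift_rfun_fgen3 hj hj' hk hk' hl hl' hjk hjl hkl, mul_inv_eq_one]
    exact rImage_tetrahedron hi hi' hj hj' hk hk' hl hl' hij hik hil hjk hjl hkl

end Relators

theorem statement_14_general (n m : ℕ) :
    (∀ r ∈ rels3 (n + 1), FreeGroup.lift (rfun n m) r = 1) ∧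
    (∃ rm : G3 (n + 1) →* G2 n, ∀ a : TIdx (n + 1),
        rm (PresentedGroup.of a) = rfun n m a) := by
  have hrels : ∀ r ∈ rels3 (n + 1), FreeGroup.lift (rfun n m) r = 1 :=
    fun _ hr => lift_rfun_eq_one_of_mem_rels3 hr
  exact ⟨hrels, PresentedGroup.toGroup hrels, fun _ => PresentedGroup.toGroup.of hrels⟩

theorem statement_14 (n m : ℕ) (hn : 3 ≤ n) (hm1 : 1 ≤ m) (hm2 : m ≤ n + 1) :
    (∀ r ∈ rels3 (n + 1), FreeGroup.lift (rfun n m) r = 1) ∧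
    (∃ rm : G3 (n + 1) →* G2 n, ∀ a : TIdx (n + 1),
        rm (PresentedGroup.of a) = rfun n m a) :=
  statement_14_general n m

end GnkBrunnian
end

section
/- In the group G_5^3, the word β = a_{124}a_{123}a_{135}a_{134}a_{124}a_{134}a_{135}a_{123}a_{134}a_{135}a_{134}a_{123}a_{135}a_{134}a_{124}a_{134}a_{135}a_{123}a_{124}a_{134}a_{135}a_{134} represents a nontrivial element, i.e., β ≠ 1 in G_5^3. -/
namespace GnkBrunnian

/-!
`β` is detected by a linear representation `G_5^3 → GL₄(𝔽₂)`: each generator goes to a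
unitriangular involution, the defining relations hold among these ten matrices, and the
product of the 22 matrices of `β` is not the identity. All three facts are finite checks.
-/

open Equiv

/-- `Fin 16` is read as `𝔽₂⁴` through binary digits; `xorLinear c` is the linear map sending the
`i`-th basis vector to `c i`. -/
def xorLinear (c : Fin 4 → Fin 16) (x : Fin 16) : Fin 16 :=
  (if x.val.testBit 0 then c 0 else 0) ^^^ (if x.val.testBit 1 then c 1 else 0) ^^^
  (if x.val.testBit 2 then c 2 else 0) ^^^ (if x.val.testBit 3 then c 3 else 0)

def xorInvolution (c : Fin 4 → Fin 16) (h : ∀ x, xorLinear c (xorLinear c x) = x) :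
    Perm (Fin 16) :=
  Function.Involutive.toPerm (xorLinear c) h

def repTriple : ℕ × ℕ × ℕ → Perm (Fin 16)
  | (1, 2, 3) => xorInvolution ![13, 6, 4, 8] (by decide)
  | (1, 2, 4) => xorInvolution ![15, 10, 12, 8] (by decide)
  | (1, 2, 5) => xorInvolution ![7, 10, 12, 8] (by decide)
  | (1, 3, 4) => xorInvolution ![1, 10, 12, 8] (by decide)
  | (1, 3, 5) => xorInvolution ![1, 10, 12, 8] (by decide)
  | (1, 4, 5) => xorInvolution ![13, 2, 4, 8] (by decide)
  | (2, 3, 4) => xorInvolution ![15, 2, 4, 8] (by decide)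
  | (2, 3, 5) => xorInvolution ![7, 2, 4, 8] (by decide)
  | (2, 4, 5) => xorInvolution ![9, 2, 4, 8] (by decide)
  | (3, 4, 5) => xorInvolution ![5, 10, 4, 8] (by decide)
  | _ => 1

def repLetter (a b c : ℕ) : Perm (Fin 16) :=
  if T3ok 5 (sort3 a b c) then repTriple (sort3 a b c) else 1

def triples5 : Finset (ℕ × ℕ × ℕ) :=
  (Finset.Icc 1 5 ×ˢ Finset.Icc 1 5 ×ˢ Finset.Icc 1 5).filter (T3ok 5)

lemma mem_triples5 (t : TIdx 5) : t.1 ∈ triples5 := by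
  obtain ⟨⟨i, j, k⟩, h⟩ := t
  simp only [T3ok] at h
  simp only [triples5, Finset.mem_filter, Finset.mem_product, Finset.mem_Icc, T3ok]
  omega

lemma repTriple_mul_self : ∀ t ∈ triples5, repTriple t * repTriple t = 1 := by
  decide +kernel

lemma repTriple_commute : ∀ s ∈ triples5, ∀ t ∈ triples5,
    (({s.1, s.2.1, s.2.2} : Finset ℕ) ∩ {t.1, t.2.1, t.2.2}).card < 2 →
      repTriple s * repTriple t = repTriple t * repTriple s := by
  decide +kernel

lemma repLetter_tetrahedron : ∀ i ∈ Finset.Icc (1 : ℕ) 5, ∀ j ∈ Finset.Icc 1 5,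
    ∀ k ∈ Finset.Icc 1 5, ∀ l ∈ Finset.Icc 1 5,
    [i, j, k, l].Nodup →
      repLetter i j k * repLetter i j l * repLetter i k l * repLetter j k l =
        repLetter j k l * repLetter i k l * repLetter i j l * repLetter i j k := by
  decide +kernel

lemma lift_fgen3 (a b c : ℕ) :
    FreeGroup.lift (fun t : TIdx 5 => repTriple t.1) (fgen3 5 a b c) = repLetter a b c := by
  unfold fgen3 repLetter
  split <;> simp [*]

lemma lift_rels3_eq_one :
    ∀ r ∈ rels3 5, FreeGroup.lift (fun t : TIdx 5 => repTriple t.1) r = 1 := by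
  rintro r ((⟨a, rfl⟩ | ⟨a, b, hab, rfl⟩) |
    ⟨i, j, k, l, hi, hi', hj, hj', hk, hk', hl, hl', hij, hik, hil, hjk, hjl, hkl, rfl⟩)
  · simpa using repTriple_mul_self a.1 (mem_triples5 a)
  · have := repTriple_commute a.1 (mem_triples5 a) b.1 (mem_triples5 b) hab
    simp [this]
  · simp only [map_mul, map_inv, lift_fgen3, mul_inv_eq_one]
    exact repLetter_tetrahedron i (by simp [*]) j (by simp [*]) k (by simp [*]) l (by simp [*])
      (by simp [*])

def repG3 : G3 5 →* Perm (Fin 16) := PresentedGroup.toGroup lift_rels3_eq_one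

lemma repG3_ggen3 (a b c : ℕ) : repG3 (ggen3 5 a b c) = repLetter a b c := by
  unfold ggen3 repLetter
  split <;> simp [repG3, *]

theorem statement_15 :
    (([(1,2,4),(1,2,3),(1,3,5),(1,3,4),(1,2,4),(1,3,4),(1,3,5),(1,2,3),(1,3,4),(1,3,5),
       (1,3,4),(1,2,3),(1,3,5),(1,3,4),(1,2,4),(1,3,4),(1,3,5),(1,2,3),(1,2,4),(1,3,4),
       (1,3,5),(1,3,4)] : List (ℕ × ℕ × ℕ)).map
        fun t => ggen3 5 t.1 t.2.1 t.2.2).prod ≠ 1 := by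
  refine ne_of_apply_ne repG3 ?_
  rw [map_one, map_list_prod, List.map_map]
  simp only [Function.comp_def, repG3_ggen3]
  decide +kernel

end GnkBrunnian
end
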